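/- Fix modal formulas φ and ψ. Then: (1) every type elimination sequence ends in the same quasi-model, which equals the maximal quasi-model and equals the union of all quasi-models; and (2) φ ∧ ¬ψ is satisfiable if and only if this final quasi-model contains a type τ = (τL, τR) with nnf(φ) ∈ τL and nnf(¬ψ) ∈ τR. -/

import Mathlib

inductive ModalFormula (α : Type) : Type
  | atom : α → ModalFormula α
  | top  : ModalFormula α
  | bot  : ModalFormula α
  | neg  : ModalFormula α → ModalFormula α
  | or   : ModalFormula α → ModalFormula α → ModalFormula α
  | and  : ModalFormula α → ModalFormula α → ModalFormula α
  | dia  : ModalFormula α → ModalFormula α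
  | box  : ModalFormula α → ModalFormula α

structure KripkeModel (α : Type) where
  World : Type
  R : World → World → Prop
  V : α → Set World

def Satisfies {α : Type} (M : KripkeModel α) : M.World → ModalFormula α → Prop
  | w, .atom p  => w ∈ M.V p
  | _, .top     => True
  | _, .bot     => False
  | w, .neg φ   => ¬ Satisfies M w φ
  | w, .or φ ψ  => Satisfies M w φ ∨ Satisfies M w ψ
  | w, .and φ ψ => Satisfies M w φ ∧ Satisfies M w ψ
  | w, .dia φ   => ∃ v, M.R w v ∧ Satisfies M v φ
  | w, .box φ   => ∀ v, M.R w v → Satisfies M v φ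

def Valid {α : Type} (φ : ModalFormula α) : Prop :=
  ∀ (M : KripkeModel α) (w : M.World), Satisfies M w φ

def ModalFormula.impl {α : Type} (φ ψ : ModalFormula α) : ModalFormula α :=
  .or (.neg φ) ψ

def sig {α : Type} : ModalFormula α → Set α
  | .atom p  => {p}
  | .top     => ∅
  | .bot     => ∅
  | .neg φ   => sig φ
  | .or φ ψ  => sig φ ∪ sig ψ
  | .and φ ψ => sig φ ∪ sig ψ
  | .dia φ   => sig φ
  | .box φ   => sig φ

def IsBisimulation {α : Type} (τ : Set α) (M M' : KripkeModel α)
    (Z : M.World → M'.World → Prop) : Prop :=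
  ∀ w w', Z w w' →
    (∀ p ∈ τ, (w ∈ M.V p ↔ w' ∈ M'.V p)) ∧
    (∀ v, M.R w v → ∃ v', M'.R w' v' ∧ Z v v') ∧
    (∀ v', M'.R w' v' → ∃ v, M.R w v ∧ Z v v')

def Bisimilar {α : Type} (τ : Set α) (M : KripkeModel α) (w : M.World)
    (M' : KripkeModel α) (w' : M'.World) : Prop :=
  ∃ Z, IsBisimulation τ M M' Z ∧ Z w w'

mutual
  /-- Negation normal form of a modal formula. -/
  def nnf {α : Type} : ModalFormula α → ModalFormula α
    | .atom p  => .atom p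
    | .top     => .top
    | .bot     => .bot
    | .neg φ   => nnfNeg φ
    | .and φ ψ => .and (nnf φ) (nnf ψ)
    | .or φ ψ  => .or (nnf φ) (nnf ψ)
    | .dia φ   => .dia (nnf φ)
    | .box φ   => .box (nnf φ)
  /-- Negation normal form of the negation of a modal formula. -/
  def nnfNeg {α : Type} : ModalFormula α → ModalFormula α
    | .atom p  => .neg (.atom p)
    | .top     => .bot
    | .bot     => .top
    | .neg φ   => nnf φ
    | .and φ ψ => .or (nnfNeg φ) (nnfNeg ψ)
    | .or φ ψ  => .and (nnfNeg φ) (nnfNeg ψ)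
    | .dia φ   => .box (nnfNeg φ)
    | .box φ   => .dia (nnfNeg φ)
end

/-- The subformulas of an NNF formula (with `SUBF(¬p) = {¬p}`). -/
def subf {α : Type} : ModalFormula α → Set (ModalFormula α)
  | .atom p  => {.atom p}
  | .top     => {.top}
  | .bot     => {.bot}
  | .neg φ   => {.neg φ}
  | .and φ ψ => subf φ ∪ subf ψ ∪ {.and φ ψ}
  | .or φ ψ  => subf φ ∪ subf ψ ∪ {.or φ ψ}
  | .dia φ   => subf φ ∪ {.dia φ}
  | .box φ   => subf φ ∪ {.box φ}

/-- A locally-consistent set of formulas. -/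
def LocallyConsistent {α : Type} (X : Set (ModalFormula α)) : Prop :=
  (∀ φ ψ : ModalFormula α, .and φ ψ ∈ X → φ ∈ X ∧ ψ ∈ X) ∧
  (∀ φ ψ : ModalFormula α, .or φ ψ ∈ X → φ ∈ X ∨ ψ ∈ X) ∧
  (.bot : ModalFormula α) ∉ X ∧
  (∀ p : α, ¬((.atom p : ModalFormula α) ∈ X ∧ (.neg (.atom p) : ModalFormula α) ∈ X))

/-- An L-type (relative to the fixed antecedent φ). -/
def IsLType {α : Type} (φ : ModalFormula α) (X : Set (ModalFormula α)) : Prop :=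
  X ⊆ subf (nnf φ) ∧ LocallyConsistent X

/-- An R-type (relative to the fixed consequent ψ). -/
def IsRType {α : Type} (ψ : ModalFormula α) (X : Set (ModalFormula α)) : Prop :=
  X ⊆ subf (nnf (.neg ψ)) ∧ LocallyConsistent X

/-- A combined type: a pair of an L-type and an R-type. -/
def IsType {α : Type} (φ ψ : ModalFormula α)
    (τ : Set (ModalFormula α) × Set (ModalFormula α)) : Prop :=
  IsLType φ τ.1 ∧ IsRType ψ τ.2

/-- Overlap-consistency of a combined type. -/
def OverlapConsistent {α : Type}
    (τ : Set (ModalFormula α) × Set (ModalFormula α)) : Prop :=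
  ∀ p : α,
    ¬((.atom p : ModalFormula α) ∈ τ.1 ∧ (.neg (.atom p) : ModalFormula α) ∈ τ.2) ∧
    ¬((.neg (.atom p) : ModalFormula α) ∈ τ.1 ∧ (.atom p : ModalFormula α) ∈ τ.2)

/-- Viable successor relation on combined types. -/
def TypeSucc {α : Type}
    (τ τ' : Set (ModalFormula α) × Set (ModalFormula α)) : Prop :=
  (∀ χ : ModalFormula α, .box χ ∈ τ.1 → χ ∈ τ'.1) ∧
  (∀ χ : ModalFormula α, .box χ ∈ τ.2 → χ ∈ τ'.2)

/-- A quasi-model for the pair (φ, ψ). -/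
def QuasiModel {α : Type} (φ ψ : ModalFormula α)
    (X : Set (Set (ModalFormula α) × Set (ModalFormula α))) : Prop :=
  (∀ τ ∈ X, IsType φ ψ τ) ∧
  (∀ τ ∈ X, OverlapConsistent τ) ∧
  (∀ τ ∈ X, ∀ χ : ModalFormula α,
    ((.dia χ : ModalFormula α) ∈ τ.1 → ∃ τ' ∈ X, TypeSucc τ τ' ∧ χ ∈ τ'.1) ∧
    ((.dia χ : ModalFormula α) ∈ τ.2 → ∃ τ' ∈ X, TypeSucc τ τ' ∧ χ ∈ τ'.2))

/-- The set of all combined types for (φ, ψ). -/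
def allTypes {α : Type} (φ ψ : ModalFormula α) :
    Set (Set (ModalFormula α) × Set (ModalFormula α)) :=
  {τ | IsType φ ψ τ}

/-- A type violating, within the set `X`, overlap-consistency or the
◇-successor condition of quasi-models. -/
def BadIn {α : Type} (X : Set (Set (ModalFormula α) × Set (ModalFormula α)))
    (τ : Set (ModalFormula α) × Set (ModalFormula α)) : Prop :=
  ¬ OverlapConsistent τ ∨
  ∃ χ : ModalFormula α,
    ((.dia χ : ModalFormula α) ∈ τ.1 ∧ ¬ ∃ τ' ∈ X, TypeSucc τ τ' ∧ χ ∈ τ'.1) ∨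
    ((.dia χ : ModalFormula α) ∈ τ.2 ∧ ¬ ∃ τ' ∈ X, TypeSucc τ τ' ∧ χ ∈ τ'.2)

/-- A type elimination sequence `X 0, …, X n` for (φ, ψ): it starts from the
set of all types, removes one bad type at each step, and ends in a quasi-model. -/
def ElimSeq {α : Type} (φ ψ : ModalFormula α)
    (X : ℕ → Set (Set (ModalFormula α) × Set (ModalFormula α))) (n : ℕ) : Prop :=
  X 0 = allTypes φ ψ ∧
  (∀ i < n, ∃ τ ∈ X i, BadIn (X i) τ ∧ X (i + 1) = X i \ {τ}) ∧
  QuasiModel φ ψ (X n)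

/-!
No type of a quasi-model `Z` is ever bad in a superset of `Z`, so every elimination step
preserves `Z ⊆ Xᵢ`; hence the final set of any elimination sequence is a quasi-model above
all quasi-models, i.e. the greatest one, and all sequences end in it.

The pairs of `nnf φ`- and `nnf ¬ψ`-subformulas true at the worlds of a Kripke model form a
quasi-model. Conversely, in a quasi-model the union `τL ∪ τR` of each type is locally
consistent thanks to overlap-consistency, so the quasi-model with `TypeSucc` as accessibility
is a Hintikka structure, and every NNF formula in `τL ∪ τR` holds at `τ`.
-/

section TypeElimination

variable {α : Type}

inductive IsNNF : ModalFormula α → Prop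
  | atom (p : α) : IsNNF (.atom p)
  | top : IsNNF .top
  | bot : IsNNF .bot
  | negAtom (p : α) : IsNNF (.neg (.atom p))
  | and {φ ψ : ModalFormula α} : IsNNF φ → IsNNF ψ → IsNNF (.and φ ψ)
  | or {φ ψ : ModalFormula α} : IsNNF φ → IsNNF ψ → IsNNF (.or φ ψ)
  | dia {φ : ModalFormula α} : IsNNF φ → IsNNF (.dia φ)
  | box {φ : ModalFormula α} : IsNNF φ → IsNNF (.box φ)

theorem isNNF_nnf_and_nnfNeg (χ : ModalFormula α) : IsNNF (nnf χ) ∧ IsNNF (nnfNeg χ) := by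
  induction χ with
  | atom p => exact ⟨.atom p, .negAtom p⟩
  | top => exact ⟨.top, .bot⟩
  | bot => exact ⟨.bot, .top⟩
  | neg _ ih => exact ih.symm
  | and _ _ ih₁ ih₂ => exact ⟨.and ih₁.1 ih₂.1, .or ih₁.2 ih₂.2⟩
  | or _ _ ih₁ ih₂ => exact ⟨.or ih₁.1 ih₂.1, .and ih₁.2 ih₂.2⟩
  | dia _ ih => exact ⟨.dia ih.1, .box ih.2⟩
  | box _ ih => exact ⟨.box ih.1, .dia ih.2⟩

theorem isNNF_nnf (χ : ModalFormula α) : IsNNF (nnf χ) := (isNNF_nnf_and_nnfNeg χ).1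

theorem satisfies_nnf_and_nnfNeg (M : KripkeModel α) (χ : ModalFormula α) (w : M.World) :
    (Satisfies M w (nnf χ) ↔ Satisfies M w χ) ∧
      (Satisfies M w (nnfNeg χ) ↔ ¬ Satisfies M w χ) := by
  induction χ generalizing w with
  | neg _ ih => simp [nnf, nnfNeg, Satisfies, ih]
  | and _ _ ih₁ ih₂ => simp [nnf, nnfNeg, Satisfies, ih₁, ih₂, imp_iff_not_or]
  | or _ _ ih₁ ih₂ => simp [nnf, nnfNeg, Satisfies, ih₁, ih₂, not_or]
  | dia _ ih => simp [nnf, nnfNeg, Satisfies, ih]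
  | box _ ih => simp [nnf, nnfNeg, Satisfies, ih]
  | _ => simp [nnf, nnfNeg, Satisfies]

theorem satisfies_nnf (M : KripkeModel α) (χ : ModalFormula α) (w : M.World) :
    Satisfies M w (nnf χ) ↔ Satisfies M w χ :=
  (satisfies_nnf_and_nnfNeg M χ w).1

theorem mem_subf_self (θ : ModalFormula α) : θ ∈ subf θ := by
  cases θ <;> simp [subf]

theorem subf_subset_of_mem {θ χ : ModalFormula α} (h : χ ∈ subf θ) : subf χ ⊆ subf θ := by
  induction θ with
  | and _ _ ih₁ ih₂ | or _ _ ih₁ ih₂ =>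
    rcases h with (h | h) | rfl
    · exact (ih₁ h).trans fun _ h => .inl (.inl h)
    · exact (ih₂ h).trans fun _ h => .inl (.inr h)
    · rfl
  | dia _ ih | box _ ih =>
    rcases h with h | rfl
    · exact (ih h).trans fun _ h => .inl h
    · rfl
  | _ => rw [Set.mem_singleton_iff.1 h]

def satisfiedSubf (M : KripkeModel α) (w : M.World) (θ : ModalFormula α) :
    Set (ModalFormula α) :=
  {χ | χ ∈ subf θ ∧ Satisfies M w χ}

section SatisfiedSubf

variable {M : KripkeModel α} {w v : M.World} {θ χ : ModalFormula α}

theorem locallyConsistent_satisfiedSubf : LocallyConsistent (satisfiedSubf M w θ) := by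
  refine ⟨fun χ₁ χ₂ ⟨h, h₁, h₂⟩ => ?_, fun χ₁ χ₂ ⟨h, hsat⟩ => ?_, fun h => h.2,
    fun p ⟨hp, hnp⟩ => hnp.2 hp.2⟩
  · exact ⟨⟨subf_subset_of_mem h (by simp [subf, mem_subf_self]), h₁⟩,
      ⟨subf_subset_of_mem h (by simp [subf, mem_subf_self]), h₂⟩⟩
  · exact hsat.imp (fun h₁ => ⟨subf_subset_of_mem h (by simp [subf, mem_subf_self]), h₁⟩)
      fun h₂ => ⟨subf_subset_of_mem h (by simp [subf, mem_subf_self]), h₂⟩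

theorem mem_satisfiedSubf_of_box (hwv : M.R w v) (h : .box χ ∈ satisfiedSubf M w θ) :
    χ ∈ satisfiedSubf M v θ :=
  ⟨subf_subset_of_mem h.1 (by simp [subf, mem_subf_self]), h.2 v hwv⟩

theorem exists_mem_satisfiedSubf_of_dia (h : .dia χ ∈ satisfiedSubf M w θ) :
    ∃ v, M.R w v ∧ χ ∈ satisfiedSubf M v θ :=
  let ⟨v, hwv, hv⟩ := h.2
  ⟨v, hwv, subf_subset_of_mem h.1 (by simp [subf, mem_subf_self]), hv⟩

end SatisfiedSubf

def worldType (φ ψ : ModalFormula α) (M : KripkeModel α) (w : M.World) :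
    Set (ModalFormula α) × Set (ModalFormula α) :=
  (satisfiedSubf M w (nnf φ), satisfiedSubf M w (nnf (.neg ψ)))

theorem quasiModel_range_worldType (φ ψ : ModalFormula α) (M : KripkeModel α) :
    QuasiModel φ ψ (Set.range (worldType φ ψ M)) := by
  refine ⟨?_, ?_, ?_⟩
  · rintro _ ⟨w, rfl⟩
    exact ⟨⟨fun _ h => h.1, locallyConsistent_satisfiedSubf⟩,
      ⟨fun _ h => h.1, locallyConsistent_satisfiedSubf⟩⟩
  · rintro _ ⟨w, rfl⟩ p
    exact ⟨fun ⟨hp, hnp⟩ => hnp.2 hp.2, fun ⟨hnp, hp⟩ => hnp.2 hp.2⟩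
  · rintro _ ⟨w, rfl⟩ χ
    have succ {v} (hwv : M.R w v) : TypeSucc (worldType φ ψ M w) (worldType φ ψ M v) :=
      ⟨fun _ => mem_satisfiedSubf_of_box hwv, fun _ => mem_satisfiedSubf_of_box hwv⟩
    constructor <;> intro h <;>
      obtain ⟨v, hwv, hv⟩ := exists_mem_satisfiedSubf_of_dia h <;>
      exact ⟨worldType φ ψ M v, ⟨v, rfl⟩, succ hwv, hv⟩

structure IsHintikkaLabelling (M : KripkeModel α) (L : M.World → Set (ModalFormula α)) :
    Prop where
  locallyConsistent : ∀ w, LocallyConsistent (L w)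
  atom_mem : ∀ {w p}, .atom p ∈ L w → w ∈ M.V p
  negAtom_mem : ∀ {w p}, .neg (.atom p) ∈ L w → w ∉ M.V p
  box_mem : ∀ {w v χ}, M.R w v → .box χ ∈ L w → χ ∈ L v
  dia_mem : ∀ {w χ}, .dia χ ∈ L w → ∃ v, M.R w v ∧ χ ∈ L v

theorem IsHintikkaLabelling.satisfies_of_mem {M : KripkeModel α}
    {L : M.World → Set (ModalFormula α)} (hL : IsHintikkaLabelling M L) {χ : ModalFormula α}
    (hχ : IsNNF χ) {w : M.World} (h : χ ∈ L w) : Satisfies M w χ := by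
  induction hχ generalizing w with
  | atom _ => exact hL.atom_mem h
  | top => trivial
  | bot => exact (hL.locallyConsistent w).2.2.1 h
  | negAtom _ => exact hL.negAtom_mem h
  | and _ _ ih₁ ih₂ =>
    obtain ⟨h₁, h₂⟩ := (hL.locallyConsistent w).1 _ _ h
    exact ⟨ih₁ h₁, ih₂ h₂⟩
  | or _ _ ih₁ ih₂ => exact ((hL.locallyConsistent w).2.1 _ _ h).imp ih₁ ih₂
  | dia _ ih =>
    obtain ⟨v, hwv, hv⟩ := hL.dia_mem h
    exact ⟨v, hwv, ih hv⟩
  | box _ ih => exact fun v hwv => ih (hL.box_mem hwv h)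

theorem LocallyConsistent.union {A B : Set (ModalFormula α)} (hA : LocallyConsistent A)
    (hB : LocallyConsistent B) (hAB : OverlapConsistent (A, B)) :
    LocallyConsistent (A ∪ B) := by
  refine ⟨?_, ?_, ?_, ?_⟩
  · rintro χ₁ χ₂ (h | h)
    · exact (hA.1 χ₁ χ₂ h).imp .inl .inl
    · exact (hB.1 χ₁ χ₂ h).imp .inr .inr
  · rintro χ₁ χ₂ (h | h)
    · exact (hA.2.1 χ₁ χ₂ h).imp .inl .inl
    · exact (hB.2.1 χ₁ χ₂ h).imp .inr .inr
  · rintro (h | h)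
    exacts [hA.2.2.1 h, hB.2.2.1 h]
  · rintro p ⟨hp | hp, hnp | hnp⟩
    exacts [hA.2.2.2 p ⟨hp, hnp⟩, (hAB p).1 ⟨hp, hnp⟩, (hAB p).2 ⟨hnp, hp⟩,
      hB.2.2.2 p ⟨hp, hnp⟩]

def typeModel (Q : Set (Set (ModalFormula α) × Set (ModalFormula α))) : KripkeModel α where
  World := Q
  R τ τ' := TypeSucc τ.1 τ'.1
  V p := {τ | .atom p ∈ τ.1.1 ∪ τ.1.2}

theorem QuasiModel.isHintikkaLabelling {φ ψ : ModalFormula α}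
    {Q : Set (Set (ModalFormula α) × Set (ModalFormula α))} (hQ : QuasiModel φ ψ Q) :
    IsHintikkaLabelling (typeModel Q) fun τ => τ.1.1 ∪ τ.1.2 := by
  have hlc (τ : (typeModel Q).World) : LocallyConsistent (τ.1.1 ∪ τ.1.2) :=
    let ⟨⟨_, hL⟩, ⟨_, hR⟩⟩ := hQ.1 τ.1 τ.2
    hL.union hR (hQ.2.1 τ.1 τ.2)
  refine ⟨hlc, id, fun {τ p} h hp => (hlc τ).2.2.2 p ⟨hp, h⟩,
    fun hττ' h => h.imp (hττ'.1 _) (hττ'.2 _), fun {τ χ} h => ?_⟩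
  rcases h with h | h
  · obtain ⟨τ', hτ', hττ', hχ⟩ := (hQ.2.2 τ.1 τ.2 χ).1 h
    exact ⟨⟨τ', hτ'⟩, hττ', .inl hχ⟩
  · obtain ⟨τ', hτ', hττ', hχ⟩ := (hQ.2.2 τ.1 τ.2 χ).2 h
    exact ⟨⟨τ', hτ'⟩, hττ', .inr hχ⟩

theorem QuasiModel.not_badIn {φ ψ : ModalFormula α}
    {Y Z : Set (Set (ModalFormula α) × Set (ModalFormula α))} (hZ : QuasiModel φ ψ Z)
    (hZY : Z ⊆ Y) {τ : Set (ModalFormula α) × Set (ModalFormula α)} (hτ : τ ∈ Z) :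
    ¬ BadIn Y τ := by
  rintro (hov | ⟨χ, ⟨hχ, hno⟩ | ⟨hχ, hno⟩⟩)
  · exact hov (hZ.2.1 τ hτ)
  · obtain ⟨τ', hτ', hττ', h⟩ := (hZ.2.2 τ hτ χ).1 hχ
    exact hno ⟨τ', hZY hτ', hττ', h⟩
  · obtain ⟨τ', hτ', hττ', h⟩ := (hZ.2.2 τ hτ χ).2 hχ
    exact hno ⟨τ', hZY hτ', hττ', h⟩

theorem QuasiModel.subset_of_eliminations {φ ψ : ModalFormula α}
    {Z : Set (Set (ModalFormula α) × Set (ModalFormula α))} (hZ : QuasiModel φ ψ Z)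
    {X : ℕ → Set (Set (ModalFormula α) × Set (ModalFormula α))} {n : ℕ}
    (h0 : X 0 = allTypes φ ψ)
    (hstep : ∀ i < n, ∃ τ ∈ X i, BadIn (X i) τ ∧ X (i + 1) = X i \ {τ}) : Z ⊆ X n := by
  induction n with
  | zero => rw [h0]; exact hZ.1
  | succ n ih =>
    have hZX := ih fun i hi => hstep i (by omega)
    obtain ⟨τ, -, hbad, hX⟩ := hstep n n.lt_succ_self
    rw [hX]
    exact Set.subset_sdiff_singleton hZX fun hτ => hZ.not_badIn hZX hτ hbad

end TypeElimination

/-- (1) All type elimination sequences end in the same quasi-model, which is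
the maximal quasi-model and the union of all quasi-models; (2) φ ∧ ¬ψ is
satisfiable iff this final quasi-model contains a type with `nnf φ` on the
left and `nnf ¬ψ` on the right. -/
theorem type_elimination {α : Type} (φ ψ : ModalFormula α)
    (X : ℕ → Set (Set (ModalFormula α) × Set (ModalFormula α))) (n : ℕ)
    (hX : ElimSeq φ ψ X n) :
    (∀ (Y : ℕ → Set (Set (ModalFormula α) × Set (ModalFormula α))) (m : ℕ),
        ElimSeq φ ψ Y m → Y m = X n) ∧
    (∀ Z, QuasiModel φ ψ Z → Z ⊆ X n) ∧
    (X n = ⋃₀ {Z | QuasiModel φ ψ Z}) ∧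
    ((∃ (M : KripkeModel α) (w : M.World), Satisfies M w (.and φ (.neg ψ))) ↔
      ∃ τ ∈ X n, nnf φ ∈ τ.1 ∧ nnf (.neg ψ) ∈ τ.2) := by
  obtain ⟨h0, hstep, hXn⟩ := hX
  have hmax (Z) (hZ : QuasiModel φ ψ Z) : Z ⊆ X n := hZ.subset_of_eliminations h0 hstep
  refine ⟨fun Y m ⟨h0', hstep', hYm⟩ => (hmax _ hYm).antisymm
    (hXn.subset_of_eliminations h0' hstep'), hmax, ?_, ⟨?_, ?_⟩⟩
  · rw [← Set.sSup_eq_sUnion]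
    exact (IsGreatest.csSup_eq (s := {Z | QuasiModel φ ψ Z}) ⟨hXn, hmax⟩).symm
  · rintro ⟨M, w, hφ, hψ⟩
    exact ⟨worldType φ ψ M w, hmax _ (quasiModel_range_worldType φ ψ M) ⟨w, rfl⟩,
      ⟨mem_subf_self _, (satisfies_nnf M φ w).2 hφ⟩,
      ⟨mem_subf_self _, (satisfies_nnf M (.neg ψ) w).2 hψ⟩⟩
  · rintro ⟨τ, hτ, hφ, hψ⟩
    have hL := hXn.isHintikkaLabelling
    exact ⟨typeModel (X n), ⟨τ, hτ⟩,
      (satisfies_nnf _ φ _).1 (hL.satisfies_of_mem (isNNF_nnf φ) (.inl hφ)),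
      (satisfies_nnf _ (.neg ψ) _).1 (hL.satisfies_of_mem (isNNF_nnf (.neg ψ)) (.inr hψ))⟩
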